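/- Iterating the penalisation map T(θ) := (1 − cos(πθ))/2 from any initial θ0 ∈ [0, 1/2) produces a sequence converging to 0, and from any θ0 ∈ (1/2, 1] a sequence converging to 1. -/

import Mathlib

open Real Filter

private lemma Tlt {T : ℝ → ℝ} (hT : ∀ θ, T θ = (1 - Real.cos (Real.pi * θ)) / 2)
    {θ : ℝ} (h0 : 0 < θ) (h1 : θ < 1/2) : T θ < θ := by
  rw [hT]
  have hx : Real.cos (Real.pi * θ) = Real.sin (Real.pi * (1/2 - θ)) := by
    rw [mul_sub, ← Real.sin_pi_div_two_sub]
    ring_nf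
  have key : 2 / Real.pi * (Real.pi * (1/2 - θ)) < Real.sin (Real.pi * (1/2 - θ)) := by
    apply Real.mul_lt_sin
    · nlinarith [Real.pi_pos]
    · nlinarith [Real.pi_pos]
  have heq : 2 / Real.pi * (Real.pi * (1/2 - θ)) = 1 - 2*θ := by
    field_simp
  rw [heq] at key
  rw [hx]
  linarith

private lemma Tle {T : ℝ → ℝ} (hT : ∀ θ, T θ = (1 - Real.cos (Real.pi * θ)) / 2)
    {θ : ℝ} (h0 : 0 ≤ θ) (h1 : θ ≤ 1/2) : T θ ≤ θ := by
  rcases eq_or_lt_of_le h0 with rfl | h0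
  · rw [hT]; norm_num
  rcases eq_or_lt_of_le h1 with rfl | h1
  · rw [hT]; norm_num [mul_one_div, Real.cos_pi_div_two]
  · exact (Tlt hT h0 h1).le

private lemma Tnonneg {T : ℝ → ℝ} (hT : ∀ θ, T θ = (1 - Real.cos (Real.pi * θ)) / 2)
    (θ : ℝ) : 0 ≤ T θ := by
  rw [hT]
  have := Real.cos_le_one (Real.pi * θ)
  linarith

private lemma part1 {T : ℝ → ℝ} (hT : ∀ θ, T θ = (1 - Real.cos (Real.pi * θ)) / 2)
    {θ₀ : ℝ} (h : θ₀ ∈ Set.Ico (0:ℝ) (1/2)) :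
    Filter.Tendsto (fun n => T^[n] θ₀) Filter.atTop (nhds 0) := by
  obtain ⟨h0, h1⟩ := h
  set a : ℕ → ℝ := fun n => T^[n] θ₀ with ha
  have hbound : ∀ n, 0 ≤ a n ∧ a n ≤ θ₀ := by
    intro n
    induction n with
    | zero => exact ⟨h0, le_rfl⟩
    | succ n ih =>
      have hstep : a (n+1) = T (a n) := Function.iterate_succ_apply' T n θ₀
      refine ⟨hstep ▸ Tnonneg hT _, ?_⟩
      rw [hstep]
      exact (Tle hT ih.1 (ih.2.trans h1.le)).trans ih.2
  have hanti : Antitone a := by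
    apply antitone_nat_of_succ_le
    intro n
    have hstep : a (n+1) = T (a n) := Function.iterate_succ_apply' T n θ₀
    rw [hstep]
    exact Tle hT (hbound n).1 ((hbound n).2.trans h1.le)
  have hbdd : BddBelow (Set.range a) := ⟨0, by rintro x ⟨n, rfl⟩; exact (hbound n).1⟩
  have hlim : Tendsto a atTop (nhds (⨅ n, a n)) := tendsto_atTop_ciInf hanti hbdd
  set L := ⨅ n, a n with hL
  have hL0 : 0 ≤ L := le_ciInf fun n => (hbound n).1
  have hLθ : L ≤ θ₀ := ciInf_le hbdd 0
  -- T is continuous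
  have hTc : Continuous T := by
    have : T = fun θ => (1 - Real.cos (Real.pi * θ)) / 2 := funext hT
    rw [this]; continuity
  have hfix : T L = L := by
    have h1' : Tendsto (fun n => a (n+1)) atTop (nhds L) :=
      hlim.comp (tendsto_add_atTop_nat 1)
    have h2' : Tendsto (fun n => T (a n)) atTop (nhds (T L)) :=
      (hTc.continuousAt).tendsto.comp hlim
    have : (fun n => a (n+1)) = fun n => T (a n) := by
      funext n; exact Function.iterate_succ_apply' T n θ₀
    rw [this] at h1'
    exact tendsto_nhds_unique h2' h1'
  have hL_eq : L = 0 := by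
    by_contra hne
    have hLpos : 0 < L := lt_of_le_of_ne hL0 (Ne.symm hne)
    exact absurd hfix (ne_of_lt (Tlt hT hLpos (hLθ.trans_lt h1)))
  rwa [hL_eq] at hlim

theorem penalisation_map_iterates (T : ℝ → ℝ)
    (hT : ∀ θ, T θ = (1 - Real.cos (Real.pi * θ)) / 2) (θ₀ : ℝ) :
    (θ₀ ∈ Set.Ico (0:ℝ) (1/2) →
      Filter.Tendsto (fun n => T^[n] θ₀) Filter.atTop (nhds 0)) ∧
    (θ₀ ∈ Set.Ioc (1/2 : ℝ) 1 →
      Filter.Tendsto (fun n => T^[n] θ₀) Filter.atTop (nhds 1)) := by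
  constructor
  · exact fun h => part1 hT h
  · intro h
    obtain ⟨h1, h2⟩ := h
    have hsym : ∀ θ, T (1 - θ) = 1 - T θ := by
      intro θ
      rw [hT, hT, mul_sub, mul_one, Real.cos_pi_sub]
      ring
    have hiter : ∀ n, T^[n] θ₀ = 1 - T^[n] (1 - θ₀) := by
      intro n
      induction n with
      | zero => simp
      | succ n ih =>
        rw [Function.iterate_succ_apply' T n θ₀, ih,
          Function.iterate_succ_apply' T n (1 - θ₀), hsym]
    have hmem : (1 - θ₀) ∈ Set.Ico (0:ℝ) (1/2) := ⟨by linarith, by linarith⟩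
    have := part1 hT hmem
    have h' : Tendsto (fun n => 1 - T^[n] (1 - θ₀)) atTop (nhds (1 - 0)) :=
      (tendsto_const_nhds.sub this)
    simp only [sub_zero] at h'
    exact h'.congr fun n => (hiter n).symm
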